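/- arXiv:1102.2038 — 2 statements merged into one kernel-verified Lean document; each statement's English description precedes it below -/
import Mathlib

section
/- Let f(x₀,r) be a scalar-valued infinitely differentiable function on an open subset of ℝ² (variables x₀ and r, with r > 0). Then for every integer m ≥ 1, ∂_r² D^r(m){f} = D^r(m){∂_r² f} − 2m · D^r(m+1){f}. -/
noncomputable section

/-- Partial derivative with respect to the second variable `r` of a function on `ℝ²`. -/
def pr2 (g : ℝ × ℝ → ℝ) (p : ℝ × ℝ) : ℝ := fderiv ℝ g p (0, 1)

/-- The operator `D_r(m) = ((1/r) ∂_r)^m`. -/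
def DrOp : ℕ → (ℝ × ℝ → ℝ) → (ℝ × ℝ → ℝ)
  | 0, f => f
  | m + 1, f => fun p => (1 / p.2) * pr2 (DrOp m f) p

/-- The operator `D^r(m)`, defined by `D^r(0){f} = f` and `D^r(m){f} = ∂_r (D^r(m-1){f} / r)`. -/
def DRop : ℕ → (ℝ × ℝ → ℝ) → (ℝ × ℝ → ℝ)
  | 0, f => f
  | m + 1, f => fun p => pr2 (fun q => DRop m f q / q.2) p

/-!
Dividing by `r` and differentiating once more, `∂_r² (g / r) = ∂_r² g / r - 2 ∂_r (g / r) / r`.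
Applied to `g = D^r(m){f}` together with the identity for `m`, this gives
`∂_r D^r(m+1){f} = (D^r(m){∂_r² f} - (2m + 2) D^r(m+1){f}) / r` on `U`, and one more `∂_r` is
the identity for `m + 1`; induction on `m`, starting from the trivial case `m = 0`.
-/

open Filter Topology
open scoped ContDiff

section pr2

variable {g h : ℝ × ℝ → ℝ} {p : ℝ × ℝ}

lemma Filter.EventuallyEq.pr2_eq (hgh : g =ᶠ[𝓝 p] h) : pr2 g p = pr2 h p := by
  rw [pr2, pr2, hgh.fderiv_eq]

lemma pr2_sub (hg : DifferentiableAt ℝ g p) (hh : DifferentiableAt ℝ h p) :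
    pr2 (fun q => g q - h q) p = pr2 g p - pr2 h p := by
  simp [pr2, fderiv_fun_sub hg hh]

lemma pr2_const_mul (c : ℝ) (hg : DifferentiableAt ℝ g p) :
    pr2 (fun q => c * g q) p = c * pr2 g p := by
  simp [pr2, fderiv_const_mul hg]

lemma pr2_div_snd (hg : DifferentiableAt ℝ g p) (hp : p.2 ≠ 0) :
    pr2 (fun q => g q / q.2) p = pr2 g p / p.2 - g p / p.2 / p.2 := by
  have hinv := (hasDerivAt_inv hp).comp_hasFDerivAt p (hasFDerivAt_snd (p := p) (𝕜 := ℝ))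
  have hquot := hg.hasFDerivAt.fun_mul hinv
  simp only [Function.comp_apply] at hquot
  simp only [pr2, div_eq_mul_inv, hquot.fderiv]
  simp only [neg_smul, smul_neg, add_apply, neg_apply, smul_apply, ContinuousLinearMap.coe_snd',
    smul_eq_mul, mul_one]
  field_simp
  ring

end pr2

section smooth

variable {g : ℝ × ℝ → ℝ} {U : Set (ℝ × ℝ)}

lemma ContDiffOn.pr2 (hU : IsOpen U) (hg : ContDiffOn ℝ ∞ g U) : ContDiffOn ℝ ∞ (pr2 g) U :=
  (hg.fderiv_of_isOpen hU le_rfl).clm_apply contDiffOn_const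

lemma ContDiffOn.div_snd (hg : ContDiffOn ℝ ∞ g U) (hU : ∀ q ∈ U, q.2 ≠ 0) :
    ContDiffOn ℝ ∞ (fun q => g q / q.2) U :=
  hg.div contDiffOn_snd hU

lemma ContDiffOn.differentiableAt_of_isOpen (hU : IsOpen U) (hg : ContDiffOn ℝ ∞ g U) {p : ℝ × ℝ}
    (hp : p ∈ U) : DifferentiableAt ℝ g p :=
  (hg.differentiableOn (by simp)).differentiableAt (hU.mem_nhds hp)

lemma contDiffOn_DRop {f : ℝ × ℝ → ℝ} (hU : IsOpen U) (hU0 : ∀ q ∈ U, q.2 ≠ 0)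
    (hf : ContDiffOn ℝ ∞ f U) (m : ℕ) : ContDiffOn ℝ ∞ (DRop m f) U := by
  induction m with
  | zero => exact hf
  | succ k ih => exact (ih.div_snd hU0).pr2 hU

lemma pr2_pr2_div_snd (hU : IsOpen U) (hU0 : ∀ q ∈ U, q.2 ≠ 0) (hg : ContDiffOn ℝ ∞ g U)
    {p : ℝ × ℝ} (hp : p ∈ U) :
    pr2 (pr2 (fun q => g q / q.2)) p
      = pr2 (pr2 g) p / p.2 - 2 * (pr2 (fun q => g q / q.2) p / p.2) := by
  have hdiff {h : ℝ × ℝ → ℝ} (hh : ContDiffOn ℝ ∞ h U) : DifferentiableAt ℝ h p :=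
    hh.differentiableAt_of_isOpen hU hp
  have hgr := hg.div_snd hU0
  have hquot : pr2 (fun q => g q / q.2) =ᶠ[𝓝 p] fun q => pr2 g q / q.2 - g q / q.2 / q.2 :=
    eventually_of_mem (hU.mem_nhds hp) fun q hq =>
      pr2_div_snd (hg.differentiableAt_of_isOpen hU hq) (hU0 q hq)
  rw [hquot.pr2_eq, pr2_sub (hdiff ((hg.pr2 hU).div_snd hU0)) (hdiff (hgr.div_snd hU0)),
    pr2_div_snd (hdiff (hg.pr2 hU)) (hU0 p hp), pr2_div_snd (hdiff hgr) (hU0 p hp),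
    pr2_div_snd (hdiff hg) (hU0 p hp)]
  ring

end smooth

theorem partial_r_sq_DRop_general (f : ℝ × ℝ → ℝ) (U : Set (ℝ × ℝ)) (hU : IsOpen U)
    (hUpos : U ⊆ {p : ℝ × ℝ | 0 < p.2}) (hf : ContDiffOn ℝ (⊤ : ℕ∞) f U)
    (m : ℕ) :
    ∀ p ∈ U, pr2 (pr2 (DRop m f)) p
      = DRop m (fun q => pr2 (pr2 f) q) p - 2 * (m : ℝ) * DRop (m + 1) f p := by
  have hU0 : ∀ q ∈ U, q.2 ≠ 0 := fun q hq => (hUpos hq).ne'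
  have hpr2f : ContDiffOn ℝ ∞ (pr2 (pr2 f)) U := (hf.pr2 hU).pr2 hU
  induction m with
  | zero => simp [DRop]
  | succ k ih =>
    intro p hp
    have hstep : ∀ q ∈ U, pr2 (DRop (k + 1) f) q
        = DRop k (pr2 (pr2 f)) q / q.2 - (2 * k + 2) * (DRop (k + 1) f q / q.2) := fun q hq => by
      rw [DRop, pr2_pr2_div_snd hU hU0 (contDiffOn_DRop hU hU0 hf k) hq, ih q hq]
      simp only [DRop]
      ring
    have hdiff {g : ℝ × ℝ → ℝ} (hg : ContDiffOn ℝ ∞ g U) :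
        DifferentiableAt ℝ (fun q => g q / q.2) p :=
      (hg.div_snd hU0).differentiableAt_of_isOpen hU hp
    have hDf := hdiff (contDiffOn_DRop hU hU0 hf (k + 1))
    rw [Filter.EventuallyEq.pr2_eq (eventually_of_mem (hU.mem_nhds hp) hstep),
      pr2_sub (hdiff (contDiffOn_DRop hU hU0 hpr2f k)) (hDf.const_mul _), pr2_const_mul _ hDf]
    simp only [DRop]
    push_cast
    ring

/-- Lemma 3.1 (ii): `∂_r² D^r(m){f} = D^r(m){∂_r² f} − 2m · D^r(m+1){f}`. -/
theorem partial_r_sq_DRop (f : ℝ × ℝ → ℝ) (U : Set (ℝ × ℝ)) (hU : IsOpen U)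
    (hUpos : U ⊆ {p : ℝ × ℝ | 0 < p.2}) (hf : ContDiffOn ℝ (⊤ : ℕ∞) f U)
    (m : ℕ) (hm : 1 ≤ m) :
    ∀ p ∈ U, pr2 (pr2 (DRop m f)) p
      = DRop m (fun q => pr2 (pr2 f) q) p - 2 * (m : ℝ) * DRop (m + 1) f p :=
  partial_r_sq_DRop_general f U hU hUpos hf m
end
end

section
/- Let Γ_ω̲ = γ_κ + Φ_ω̲ + Ψ be the spherical Dunkl-Gamma operator. Then: (i) if f(x̲) = f(|x̲|) is a radial C¹ function, then Γ_ω̲ f = 0; (ii) if P_n is a homogeneous Dunkl-monogenic function of degree n, then Γ_ω̲ P_n(ω̲) = −n P_n(ω̲); (iii) under the same hypothesis, Γ_ω̲ (ω̲ P_n(ω̲)) = (μ + n − 1) ω̲ P_n(ω̲), where μ = 2γ_κ + d. -/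
open scoped BigOperators RealInnerProductSpace

noncomputable section

/-- Euclidean space `ℝ^d`. -/
abbrev Vd (d : ℕ) := EuclideanSpace ℝ (Fin d)

/-- The reflection `σ_a x = x − 2(⟪a,x⟫/|a|²) a` in the hyperplane orthogonal to `a`. -/
def reflect {d : ℕ} (a x : Vd d) : Vd d := x - ((2 * ⟪a, x⟫) / ⟪a, a⟫) • a

/-- A finite root system `R` with a choice of positive subsystem `Rp` and a `W`-invariant
multiplicity function `kap`. -/
structure DunklData (d : ℕ) where
  R : Finset (Vd d)
  Rp : Finset (Vd d)
  kap : Vd d → ℝ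
  zero_not_mem : (0 : Vd d) ∉ R
  inter_line : ∀ a ∈ R, ∀ c : ℝ, c • a ∈ R → c = 1 ∨ c = -1
  reflect_mem : ∀ a ∈ R, ∀ b ∈ R, reflect a b ∈ R
  Rp_subset : Rp ⊆ R
  pos_split : ∀ a ∈ R, Xor' (a ∈ Rp) (-a ∈ Rp)
  kap_nonneg : ∀ a ∈ R, 0 ≤ kap a
  kap_invariant : ∀ a ∈ R, ∀ b ∈ R, kap (reflect a b) = kap b

/-- The index `γ_κ = Σ_{α ∈ R₊} κ(α)`. -/
def gam {d : ℕ} (S : DunklData d) : ℝ := ∑ a ∈ S.Rp, S.kap a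

/-- The Dunkl dimension `μ = 2γ_κ + d`. -/
def dunklDim {d : ℕ} (S : DunklData d) : ℝ := 2 * gam S + d

variable {d : ℕ} {A : Type*} [NormedRing A] [NormedAlgebra ℝ A]

/-- The Clifford algebra relations `e_i e_j + e_j e_i = −2δ_{ij}` for the generators of
`ℝ_{0,d}`, together with linear independence of the basis products `e_A`. -/
def CliffordRel (e : Fin d → A) : Prop :=
  (∀ i j, e i * e j + e j * e i = if i = j then (-2 : A) else 0) ∧
    LinearIndependent ℝ (fun s : Finset (Fin d) => ((s.sort (· ≤ ·)).map e).prod)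

/-- The Clifford vector `x̲ = Σ x_i e_i` associated to `x ∈ ℝ^d`. -/
def vecC (e : Fin d → A) (x : Vd d) : A := ∑ i, x i • e i

/-- The Dunkl difference quotient `(f(x) − f(σ_a x)) / ⟪a, x⟫`, extended by continuity
(for differentiable `f`) across the hyperplane `⟪a, x⟫ = 0`. -/
def dQuot (a : Vd d) (f : Vd d → A) (x : Vd d) : A :=
  if ⟪a, x⟫ = 0 then (2 / ⟪a, a⟫) • fderiv ℝ f x a
  else (⟪a, x⟫)⁻¹ • (f x - f (reflect a x))

/-- The Dunkl operator `T_{x_i}` on `ℝ^d`. -/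
def dunklT (S : DunklData d) (i : Fin d) (f : Vd d → A) (x : Vd d) : A :=
  fderiv ℝ f x (EuclideanSpace.single i 1) + ∑ a ∈ S.Rp, (S.kap a * a i) • dQuot a f x

/-- The Dunkl-Dirac operator `D̲ = Σ e_i T_{x_i}` on `ℝ^d`. -/
def diracD (e : Fin d → A) (S : DunklData d) (f : Vd d → A) (x : Vd d) : A :=
  ∑ i, e i * dunklT S i f x

/-- The angular derivative operator `Φ_ω = −Σ_{i<j} e_i e_j (x_i ∂_{x_j} − x_j ∂_{x_i})`. -/
def PhiOp (e : Fin d → A) (f : Vd d → A) (x : Vd d) : A :=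
  -∑ i, ∑ j ∈ Finset.Ioi i, e i * e j *
    (x i • fderiv ℝ f x (EuclideanSpace.single j 1)
      - x j • fderiv ℝ f x (EuclideanSpace.single i 1))

/-- The difference part `Ψ` of the spherical Dunkl-Gamma operator. -/
def PsiOp (e : Fin d → A) (S : DunklData d) (f : Vd d → A) (x : Vd d) : A :=
  (-∑ i, ∑ j ∈ Finset.Ioi i, e i * e j *
      (∑ a ∈ S.Rp, (S.kap a * (x i * a j - x j * a i)) • dQuot a f x))
    - ∑ a ∈ S.Rp, S.kap a • f (reflect a x)

/-- The spherical Dunkl-Gamma operator `Γ_ω = γ_κ + Φ_ω + Ψ`. -/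
def GammaOp (e : Fin d → A) (S : DunklData d) (f : Vd d → A) (x : Vd d) : A :=
  gam S • f x + PhiOp e f x + PsiOp e S f x

/-!
Everything rests on the identity `x̲ D̲ = −E − Γ_ω`, where `E = Σ x_i ∂_{x_i}` is the Euler
operator. Writing `x̲ D̲ = Σ_{i,j} x_i e_i e_j T_{x_j}`, the diagonal terms give
`−Σ x_i T_{x_i} = −E − γ_κ + Σ κ(α) σ_α`, and pairing `(i, j)` with `(j, i)` through
`e_j e_i = −e_i e_j` turns the off-diagonal terms into `−Φ_ω − Ψ − Σ κ(α) σ_α`.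

For a radial `f` the gradient is parallel to `x` and all difference quotients vanish, so
`D̲ f = x̲ E f / |x|²` and `x̲ D̲ f = −E f`. For a homogeneous monogenic `P` of degree `n`,
Euler's identity `E P = n P` gives (ii); for (iii) one uses in addition the commutation rule
`D̲ (x̲ P) = −(d + 2γ_κ) P − 2 E P − x̲ D̲ P`, in which the reflection terms contribute
`−2γ_κ P` because `α̲² = −|α|²`.
-/

theorem Finset.sum_sum_eq_sum_diag_add_sum_Ioi {ι M : Type*} [Fintype ι] [LinearOrder ι]
    [LocallyFiniteOrderTop ι] [AddCommMonoid M] (g : ι → ι → M) :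
    ∑ i, ∑ j, g i j = ∑ i, g i i + ∑ i, ∑ j ∈ Finset.Ioi i, (g i j + g j i) := by
  have hsplit : ∀ i, ∑ j, g i j = g i i + ∑ j ∈ Finset.Ioi i, g i j + ∑ j with j < i, g i j := by
    intro i
    rw [← Finset.sum_filter_not_add_sum_filter Finset.univ (· < i),
      ← Finset.sum_cons (by simp : i ∉ Finset.Ioi i)]
    congr 2
    ext j
    simp [le_iff_eq_or_lt]
  have hswap : ∑ i, ∑ j with j < i, g i j = ∑ i, ∑ j ∈ Finset.Ioi i, g j i :=
    Finset.sum_comm' (by simp)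
  simp only [hsplit, Finset.sum_add_distrib, hswap]
  abel

section Calculus
variable {E F : Type*} [NormedAddCommGroup E] [InnerProductSpace ℝ E]
  [NormedAddCommGroup F] [NormedSpace ℝ F]

theorem hasFDerivAt_norm_of_ne_zero {x : E} (hx : x ≠ 0) :
    HasFDerivAt (‖·‖) (‖x‖⁻¹ • innerSL ℝ x) x := by
  have h := (hasStrictFDerivAt_norm_sq x).hasFDerivAt.sqrt (by positivity)
  simp only [Real.sqrt_sq (norm_nonneg _)] at h
  convert h using 1
  ext v
  simp only [smul_apply, coe_innerSL_apply, smul_eq_mul, one_div, mul_inv_rev,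
    nsmul_eq_mul, Nat.cast_ofNat]
  field_simp

theorem fderiv_apply_eq_of_radial {f : E → F} (hrad : ∀ x y : E, ‖x‖ = ‖y‖ → f x = f y)
    {x : E} (hx : x ≠ 0) (v : E) :
    fderiv ℝ f x v = (⟪x, v⟫ / ‖x‖ ^ 2) • fderiv ℝ f x x := by
  by_cases hf : DifferentiableAt ℝ f x
  swap
  · simp [fderiv_zero_of_not_differentiableAt hf]
  have hnx : ‖x‖ ≠ 0 := norm_ne_zero_iff.mpr hx
  -- `f` factors through the retraction `y ↦ ‖y‖ • u` onto the ray through `x`, which fixes `x`.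
  set u := ‖x‖⁻¹ • x
  have hfactor : (fun y => f (‖y‖ • u)) = f :=
    funext fun y => hrad _ _ (by simp [u, norm_smul, hnx])
  have hf' : HasFDerivAt f (fderiv ℝ f x) (‖x‖ • u) := by simpa [u, hnx] using hf.hasFDerivAt
  have h := hf'.comp x ((hasFDerivAt_norm_of_ne_zero hx).smul_const u)
  rw [Function.comp_def, hfactor] at h
  rw [h.fderiv]
  simp only [ContinuousLinearMap.comp_apply, ContinuousLinearMap.smulRight_apply,
    smul_apply, coe_innerSL_apply, smul_eq_mul, smul_smul, map_smul,
    real_inner_self_eq_norm_sq, u]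
  congr 1
  field_simp

theorem fderiv_apply_self_of_homogeneous {P : E → F} {x : E} {n : ℝ}
    (hP : DifferentiableAt ℝ P x) (hhom : ∀ c : ℝ, 0 < c → ∀ y, P (c • y) = c ^ n • P y) :
    fderiv ℝ P x x = n • P x := by
  have hray : HasDerivAt (fun c : ℝ => P (c • x)) (fderiv ℝ P x x) 1 := by
    have h := (one_smul ℝ x ▸ hP.hasFDerivAt).comp_hasDerivAt (1 : ℝ)
      ((hasDerivAt_id (1 : ℝ)).smul_const x)
    simpa [Function.comp_def] using h
  have hpow : HasDerivAt (fun c : ℝ => c ^ n • P x) (n • P x) 1 := by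
    simpa using (Real.hasDerivAt_rpow_const (x := 1) (p := n) (Or.inl one_ne_zero)).smul_const
      (P x)
  have heq : (fun c : ℝ => P (c • x)) =ᶠ[nhds 1] fun c => c ^ n • P x :=
    Filter.eventually_of_mem (Ioi_mem_nhds one_pos) fun c hc => hhom c hc x
  exact hray.unique (heq.hasDerivAt_iff.mpr hpow)

end Calculus

section Reflection

theorem reflect_of_inner_eq_zero {a x : Vd d} (h : ⟪a, x⟫ = 0) : reflect a x = x := by
  simp [reflect, h]

theorem reflect_eq_reflection (a x : Vd d) : reflect a x = (ℝ ∙ a)ᗮ.reflection x := by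
  rw [Submodule.reflection_orthogonal_apply, Submodule.reflection_singleton_apply, reflect,
    real_inner_self_eq_norm_sq]
  simp only [RCLike.ofReal_real_eq_id, id, mul_div_assoc]
  module

theorem norm_reflect (a x : Vd d) : ‖reflect a x‖ = ‖x‖ := by
  rw [reflect_eq_reflection, LinearIsometryEquiv.norm_map]

theorem DunklData.inner_self_pos (S : DunklData d) {a : Vd d} (ha : a ∈ S.Rp) : 0 < ⟪a, a⟫ :=
  real_inner_self_pos.mpr fun h => S.zero_not_mem (h ▸ S.Rp_subset ha)

end Reflection

section Operators
variable {e : Fin d → A}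

def vecCL (e : Fin d → A) : Vd d →L[ℝ] A :=
  ∑ i, (EuclideanSpace.proj i : Vd d →L[ℝ] ℝ).smulRight (e i)

@[simp]
theorem vecCL_apply (e : Fin d → A) (v : Vd d) : vecCL e v = vecC e v := by
  simp [vecCL, vecC]

theorem vecC_single (j : Fin d) : vecC e (EuclideanSpace.single j 1) = e j := by
  simp [vecC, PiLp.single_apply]

theorem apply_eq_sum_smul_apply_single (L : Vd d →L[ℝ] A) (x : Vd d) :
    L x = ∑ i, x i • L (EuclideanSpace.single i 1) := by
  conv_lhs => rw [← (EuclideanSpace.basisFun (Fin d) ℝ).sum_repr x]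
  simp

theorem inner_smul_dQuot (a : Vd d) (f : Vd d → A) (x : Vd d) :
    ⟪a, x⟫ • dQuot a f x = f x - f (reflect a x) := by
  by_cases h : ⟪a, x⟫ = 0
  · simp [h, reflect_of_inner_eq_zero h]
  · simp [dQuot, h, smul_smul]

theorem sum_smul_dunklT (S : DunklData d) (f : Vd d → A) (x : Vd d) :
    ∑ i, x i • dunklT S i f x
      = fderiv ℝ f x x + ∑ a ∈ S.Rp, S.kap a • (f x - f (reflect a x)) := by
  simp only [dunklT, smul_add, Finset.sum_add_distrib, Finset.smul_sum, smul_smul]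
  rw [← apply_eq_sum_smul_apply_single, Finset.sum_comm]
  congr 1
  refine Finset.sum_congr rfl fun a _ => ?_
  rw [← Finset.sum_smul, ← inner_smul_dQuot, smul_smul]
  congr 1
  rw [PiLp.inner_apply, Finset.mul_sum]
  exact Finset.sum_congr rfl fun i _ => by simp only [RCLike.inner_apply, conj_trivial]; ring

theorem smul_dunklT_sub_smul_dunklT (S : DunklData d) (f : Vd d → A) (x : Vd d) (i j : Fin d) :
    x i • dunklT S j f x - x j • dunklT S i f x
      = (x i • fderiv ℝ f x (EuclideanSpace.single j 1)
          - x j • fderiv ℝ f x (EuclideanSpace.single i 1))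
        + ∑ a ∈ S.Rp, (S.kap a * (x i * a j - x j * a i)) • dQuot a f x := by
  simp only [dunklT, smul_add, Finset.smul_sum, smul_smul, mul_sub, sub_smul,
    Finset.sum_sub_distrib, mul_left_comm (x _)]
  abel

theorem phiOp_add_psiOp (S : DunklData d) (f : Vd d → A) (x : Vd d) :
    PhiOp e f x + PsiOp e S f x
      = -(∑ i, ∑ j ∈ Finset.Ioi i, e i * e j * (x i • dunklT S j f x - x j • dunklT S i f x))
        - ∑ a ∈ S.Rp, S.kap a • f (reflect a x) := by
  simp only [PhiOp, PsiOp, smul_dunklT_sub_smul_dunklT, mul_add, Finset.sum_add_distrib]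
  abel

theorem fderiv_vecC_mul_apply {P : Vd d → A} {x : Vd d} (hP : DifferentiableAt ℝ P x) (v : Vd d) :
    fderiv ℝ (fun y => vecC e y * P y) x v = vecC e v * P x + vecC e x * fderiv ℝ P x v := by
  rw [show (fun y => vecC e y * P y) = fun y => vecCL e y * P y by simp,
    fderiv_fun_mul' (vecCL e).differentiableAt hP]
  simp [add_comm]

theorem dQuot_vecC_mul {P : Vd d → A} {x : Vd d} (hP : DifferentiableAt ℝ P x) (a : Vd d) :
    dQuot a (fun y => vecC e y * P y) x
      = vecC e x * dQuot a P x + (2 / ⟪a, a⟫) • (vecC e a * P (reflect a x)) := by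
  by_cases h : ⟪a, x⟫ = 0
  · simp [dQuot, h, fderiv_vecC_mul_apply hP, reflect_of_inner_eq_zero h, add_comm]
  · have hvec : vecC e (reflect a x) = vecC e x - (2 * ⟪a, x⟫ / ⟪a, a⟫) • vecC e a := by
      simp only [← vecCL_apply, reflect, map_sub, map_smul]
    simp only [dQuot, h, if_false, hvec, sub_mul, mul_sub, smul_mul_assoc, smul_sub,
      mul_smul_comm]
    rw [smul_smul, show ⟪a, x⟫⁻¹ * (2 * ⟪a, x⟫ / ⟪a, a⟫) = 2 / ⟪a, a⟫ by field_simp]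
    abel

theorem dunklT_vecC_mul (S : DunklData d) {P : Vd d → A} {x : Vd d}
    (hP : DifferentiableAt ℝ P x) (j : Fin d) :
    dunklT S j (fun y => vecC e y * P y) x
      = e j * P x + vecC e x * dunklT S j P x
        + ∑ a ∈ S.Rp, (S.kap a * a j * (2 / ⟪a, a⟫)) • (vecC e a * P (reflect a x)) := by
  simp only [dunklT, fderiv_vecC_mul_apply hP, dQuot_vecC_mul hP, vecC_single, mul_add,
    Finset.mul_sum, mul_smul_comm, smul_add, Finset.sum_add_distrib, smul_smul]
  abel

theorem dQuot_eq_zero_of_radial {f : Vd d → A} {x : Vd d}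
    (hrad : ∀ x y : Vd d, ‖x‖ = ‖y‖ → f x = f y) (hx : x ≠ 0) (a : Vd d) :
    dQuot a f x = 0 := by
  by_cases h : ⟪a, x⟫ = 0
  · simp [dQuot, h, fderiv_apply_eq_of_radial hrad hx a, real_inner_comm a x]
  · simp [dQuot, h, hrad x _ (norm_reflect a x).symm]

theorem diracD_eq_vecC_mul_of_radial (S : DunklData d) {f : Vd d → A} {x : Vd d}
    (hrad : ∀ x y : Vd d, ‖x‖ = ‖y‖ → f x = f y) (hx : x ≠ 0) :
    diracD e S f x = vecC e x * ((‖x‖ ^ 2)⁻¹ • fderiv ℝ f x x) := by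
  have hpartial : ∀ i, fderiv ℝ f x (EuclideanSpace.single i 1)
      = x i • ((‖x‖ ^ 2)⁻¹ • fderiv ℝ f x x) := fun i => by
    rw [fderiv_apply_eq_of_radial hrad hx, EuclideanSpace.inner_single_right, smul_smul]
    simp [div_eq_mul_inv]
  simp only [diracD, dunklT, dQuot_eq_zero_of_radial hrad hx, hpartial, smul_zero,
    Finset.sum_const_zero, add_zero, vecC, Finset.sum_mul, smul_mul_assoc, mul_smul_comm]
  rw [Finset.smul_sum]
  exact Finset.sum_congr rfl fun i _ => smul_comm _ _ _

end Operators

section Clifford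
variable {e : Fin d → A} (hrel : ∀ i j, e i * e j + e j * e i = if i = j then (-2 : A) else 0)
include hrel

theorem vecC_mul_vecC_add_vecC_mul_vecC (a x : Vd d) :
    vecC e a * vecC e x + vecC e x * vecC e a = (-2 * ⟪a, x⟫) • (1 : A) := by
  simp only [vecC, Finset.sum_mul, Finset.mul_sum, smul_mul_smul_comm]
  conv_lhs => arg 2; rw [Finset.sum_comm]
  rw [← Finset.sum_add_distrib]
  simp_rw [mul_comm (x _) (a _), ← Finset.sum_add_distrib, ← smul_add, hrel, smul_ite, smul_zero,
    Finset.sum_ite_eq', Finset.mem_univ, if_true, PiLp.inner_apply, Finset.mul_sum,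
    Finset.sum_smul]
  refine Finset.sum_congr rfl fun i _ => ?_
  rw [RCLike.inner_apply, conj_trivial, show (-2 : A) = (-2 : ℝ) • (1 : A) by
    rw [neg_smul, two_smul, one_add_one_eq_two]]
  module

theorem vecC_mul_self (a : Vd d) : vecC e a * vecC e a = (-⟪a, a⟫) • (1 : A) := by
  apply smul_right_injective A (two_ne_zero : (2 : ℝ) ≠ 0)
  simp only [two_smul, vecC_mul_vecC_add_vecC_mul_vecC hrel, ← add_smul]
  ring_nf

theorem gen_mul_self (i : Fin d) : e i * e i = -1 := by
  simpa [vecC_single] using vecC_mul_self hrel (EuclideanSpace.single i 1)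

theorem gen_mul_vecC (j : Fin d) (x : Vd d) :
    e j * vecC e x = (-2 * x j) • (1 : A) - vecC e x * e j :=
  eq_sub_of_add_eq <| by
    simpa only [vecC_single, EuclideanSpace.inner_single_left, map_one, one_mul] using
      vecC_mul_vecC_add_vecC_mul_vecC hrel (EuclideanSpace.single j 1) x

theorem gammaOp_eq_neg_fderiv_sub_vecC_mul_diracD (S : DunklData d) (f : Vd d → A) (x : Vd d) :
    GammaOp e S f x = -fderiv ℝ f x x - vecC e x * diracD e S f x := by
  set T := fun i => dunklT S i f x
  have hexpand : vecC e x * diracD e S f x = ∑ i, ∑ j, x i • (e i * (e j * T j)) := by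
    simp only [vecC, diracD, Finset.sum_mul, Finset.mul_sum, smul_mul_assoc, T]
    exact Finset.sum_comm
  have hdiag : ∀ i, x i • (e i * (e i * T i)) = -(x i • T i) := fun i => by
    rw [← mul_assoc, gen_mul_self hrel, neg_one_mul, smul_neg]
  have hpair : ∀ i j, i < j → x i • (e i * (e j * T j)) + x j • (e j * (e i * T i))
      = e i * e j * (x i • T j - x j • T i) := fun i j hij => by
    have hanti : e j * e i = -(e i * e j) :=
      eq_neg_of_add_eq_zero_right (by simpa [hij.ne] using hrel i j)
    rw [← mul_assoc, ← mul_assoc, hanti]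
    simp only [neg_mul, mul_sub, mul_smul_comm, smul_neg]
    abel
  have hgam : gam S • f x = ∑ a ∈ S.Rp, S.kap a • f x := Finset.sum_smul
  rw [hexpand, Finset.sum_sum_eq_sum_diag_add_sum_Ioi, Finset.sum_congr rfl fun i _ => hdiag i,
    Finset.sum_congr rfl fun i _ => Finset.sum_congr rfl fun j hj =>
      hpair i j (Finset.mem_Ioi.mp hj),
    Finset.sum_neg_distrib, sum_smul_dunklT, GammaOp, add_assoc, phiOp_add_psiOp, hgam]
  simp only [smul_sub, Finset.sum_sub_distrib, T]
  abel

theorem diracD_vecC_mul (S : DunklData d) {P : Vd d → A} {x : Vd d}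
    (hP : DifferentiableAt ℝ P x) :
    diracD e S (fun y => vecC e y * P y) x
      = -(((d : ℝ) + 2 * gam S) • P x) - (2 : ℝ) • fderiv ℝ P x x
        - vecC e x * diracD e S P x := by
  have hgen : ∑ j, e j * (e j * P x) = -((d : ℝ) • P x) := by
    simp [← mul_assoc, gen_mul_self hrel, Nat.cast_smul_eq_nsmul]
  have hvec : ∑ j, e j * (vecC e x * dunklT S j P x)
      = -(2 : ℝ) • ∑ j, x j • dunklT S j P x - vecC e x * diracD e S P x := by
    simp only [← mul_assoc, gen_mul_vecC hrel, sub_mul, Finset.sum_sub_distrib, diracD,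
      Finset.mul_sum, smul_mul_assoc, one_mul, Finset.smul_sum, smul_smul]
  have hrefl : ∑ j, e j * ∑ a ∈ S.Rp, (S.kap a * a j * (2 / ⟪a, a⟫)) • (vecC e a * P (reflect a x))
      = -(2 : ℝ) • ∑ a ∈ S.Rp, S.kap a • P (reflect a x) := by
    simp only [Finset.mul_sum, Finset.smul_sum, mul_smul_comm]
    rw [Finset.sum_comm]
    refine Finset.sum_congr rfl fun a ha => ?_
    have hsum : ∀ w : A, ∑ j, (S.kap a * a j * (2 / ⟪a, a⟫)) • (e j * w)
        = (S.kap a * (2 / ⟪a, a⟫)) • (vecC e a * w) := fun w => by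
      simp only [vecC, Finset.sum_mul, Finset.smul_sum, smul_mul_assoc, smul_smul]
      exact Finset.sum_congr rfl fun j _ => by ring_nf
    rw [hsum, ← mul_assoc, vecC_mul_self hrel, smul_mul_assoc, one_mul, smul_smul, smul_smul]
    have haa := (S.inner_self_pos ha).ne'
    congr 1
    field_simp
  have hgam : gam S • P x = ∑ a ∈ S.Rp, S.kap a • P x := Finset.sum_smul
  rw [diracD]
  simp only [dunklT_vecC_mul S hP, mul_add, Finset.sum_add_distrib]
  rw [hgen, hvec, hrefl, sum_smul_dunklT, add_smul, mul_smul, hgam]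
  simp only [smul_sub, Finset.sum_sub_distrib]
  module

theorem gammaOp_eq_zero_of_radial (S : DunklData d) {f : Vd d → A} {x : Vd d}
    (hrad : ∀ x y : Vd d, ‖x‖ = ‖y‖ → f x = f y) (hx : x ≠ 0) : GammaOp e S f x = 0 := by
  rw [gammaOp_eq_neg_fderiv_sub_vecC_mul_diracD hrel, diracD_eq_vecC_mul_of_radial S hrad hx,
    ← mul_assoc, vecC_mul_self hrel, smul_mul_assoc, one_mul, smul_smul,
    real_inner_self_eq_norm_sq, neg_mul, mul_inv_cancel₀ (by positivity), neg_one_smul,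
    sub_neg_eq_add, neg_add_cancel]

theorem gammaOp_eq_neg_smul_of_homogeneous (S : DunklData d) {P : Vd d → A} {x : Vd d} {n : ℝ}
    (hP : DifferentiableAt ℝ P x) (hhom : ∀ c : ℝ, 0 < c → ∀ y, P (c • y) = c ^ n • P y)
    (hmono : diracD e S P x = 0) :
    GammaOp e S P x = (-n) • P x := by
  rw [gammaOp_eq_neg_fderiv_sub_vecC_mul_diracD hrel, hmono, mul_zero, sub_zero,
    fderiv_apply_self_of_homogeneous hP hhom, neg_smul]

theorem gammaOp_vecC_mul_of_homogeneous (S : DunklData d) {P : Vd d → A} {x : Vd d} {n : ℝ}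
    (hP : DifferentiableAt ℝ P x) (hhom : ∀ c : ℝ, 0 < c → ∀ y, P (c • y) = c ^ n • P y)
    (hmono : diracD e S P x = 0) :
    GammaOp e S (fun y => vecC e y * P y) x = (dunklDim S + n - 1) • (vecC e x * P x) := by
  rw [gammaOp_eq_neg_fderiv_sub_vecC_mul_diracD hrel, diracD_vecC_mul hrel S hP,
    fderiv_vecC_mul_apply hP, fderiv_apply_self_of_homogeneous hP hhom, hmono, mul_zero,
    sub_zero, dunklDim]
  simp only [mul_sub, mul_neg, mul_smul_comm]
  module

end Clifford

theorem gammaOp_radial_and_monogenic_general (d : ℕ) (A : Type*) [NormedRing A] [NormedAlgebra ℝ A]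
    (e : Fin d → A) (he : CliffordRel e) (S : DunklData d) :
    (∀ f : Vd d → A, (∀ x y : Vd d, ‖x‖ = ‖y‖ → f x = f y) →
      (∀ x : Vd d, x ≠ 0 → DifferentiableAt ℝ f x) →
      ∀ x : Vd d, x ≠ 0 → GammaOp e S f x = 0) ∧
    (∀ (n : ℝ) (P : Vd d → A), (∀ x : Vd d, x ≠ 0 → DifferentiableAt ℝ P x) →
      (∀ c : ℝ, 0 < c → ∀ x : Vd d, P (c • x) = (c ^ n) • P x) →
      (∀ x : Vd d, x ≠ 0 → diracD e S P x = 0) →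
      (∀ x : Vd d, x ≠ 0 → GammaOp e S P x = (-n) • P x) ∧
      (∀ x : Vd d, x ≠ 0 →
        GammaOp e S (fun y => vecC e y * P y) x
          = (dunklDim S + n - 1) • (vecC e x * P x))) :=
  ⟨fun _ hrad _ _ hx => gammaOp_eq_zero_of_radial he.1 S hrad hx,
    fun _ _ hdiff hhom hmono =>
      ⟨fun x hx => gammaOp_eq_neg_smul_of_homogeneous he.1 S (hdiff x hx) hhom (hmono x hx),
        fun x hx => gammaOp_vecC_mul_of_homogeneous he.1 S (hdiff x hx) hhom (hmono x hx)⟩⟩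

/-- Proposition 2.2: (i) `Γ_ω` annihilates radial functions; for a homogeneous
Dunkl-monogenic function `P` of degree `n` one has (ii) `Γ_ω P = −n P` and
(iii) `Γ_ω (ω P) = (μ + n − 1) ω P` (stated for `x̲ P`, which agrees with `ω P`
up to a radial factor), where `μ = 2γ_κ + d`. -/
theorem gammaOp_radial_and_monogenic (d : ℕ) (A : Type*) [NormedRing A] [NormedAlgebra ℝ A]
    (e : Fin d → A) (he : CliffordRel e) (S : DunklData d) (hγ : 0 < gam S) :
    (∀ f : Vd d → A, (∀ x y : Vd d, ‖x‖ = ‖y‖ → f x = f y) →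
      (∀ x : Vd d, x ≠ 0 → DifferentiableAt ℝ f x) →
      ∀ x : Vd d, x ≠ 0 → GammaOp e S f x = 0) ∧
    (∀ (n : ℝ) (P : Vd d → A), (∀ x : Vd d, x ≠ 0 → DifferentiableAt ℝ P x) →
      (∀ c : ℝ, 0 < c → ∀ x : Vd d, P (c • x) = (c ^ n) • P x) →
      (∀ x : Vd d, x ≠ 0 → diracD e S P x = 0) →
      (∀ x : Vd d, x ≠ 0 → GammaOp e S P x = (-n) • P x) ∧
      (∀ x : Vd d, x ≠ 0 →
        GammaOp e S (fun y => vecC e y * P y) x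
          = (dunklDim S + n - 1) • (vecC e x * P x))) :=
  gammaOp_radial_and_monogenic_general d A e he S
end
end
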